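/- arXiv:1601.02365 — 2 statements merged into one kernel-verified Lean document; each statement's English description precedes it below -/
import Mathlib

section
/- Let m, n ≥ 1 and k ≥ 2. Let A be a real symmetric 2m×2m matrix such that M := A + (i/2)J_{2m} is positive semidefinite and invertible, let C be a real symmetric 2n×2n matrix, B a real 2m×2n matrix, and θ a real symmetric 2n×2n matrix. Then S_k(A,B,C,θ) + (i/2)(J_{2m} ⊕ (I_k ⊗ J_{2n})) is positive semidefinite if and only if both C − θ + (i/2)J_{2n} and C + (k−1)θ + (i/2)J_{2n} − k Bᵀ M⁻¹ B are positive semidefinite complex matrices. -/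
open Matrix Complex
open scoped Kronecker ComplexOrder

noncomputable section

/-- The standard symplectic-form matrix `J_{2n}`: the block-diagonal direct sum of `n`
copies of `[[0,1],[-1,0]]`. -/
def Jmat (n : ℕ) : Matrix (Fin (2 * n)) (Fin (2 * n)) ℝ := fun i j =>
  if i.val + 1 = j.val ∧ i.val % 2 = 0 then 1
  else if j.val + 1 = i.val ∧ j.val % 2 = 0 then -1 else 0

/-- Embedding of real matrices into complex matrices. -/
def toC {p q : Type*} (M : Matrix p q ℝ) : Matrix p q ℂ := M.map (fun x => (x : ℂ))

/-- The `k`-extension `S_k(A,B,C,θ)` of the block covariance matrix `[[A,B],[Bᵀ,C]]`: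
the `(0,0)`-block is `A`, the blocks coupling the `0`-component to each of the `k` copies
are `B` (with `Bᵀ` below), the diagonal blocks on the copies are `C`, and the block between
copies `a < b` is `θ` (and `θᵀ` between copies `a > b`). -/
def Sext {m n : ℕ} (k : ℕ) (A : Matrix (Fin (2 * m)) (Fin (2 * m)) ℝ)
    (B : Matrix (Fin (2 * m)) (Fin (2 * n)) ℝ)
    (C θ : Matrix (Fin (2 * n)) (Fin (2 * n)) ℝ) :
    Matrix (Fin (2 * m) ⊕ Fin k × Fin (2 * n)) (Fin (2 * m) ⊕ Fin k × Fin (2 * n)) ℝ :=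
  fun x y =>
    match x, y with
    | Sum.inl i, Sum.inl j => A i j
    | Sum.inl i, Sum.inr (_, j) => B i j
    | Sum.inr (_, i), Sum.inl j => B j i
    | Sum.inr (a, i), Sum.inr (b, j) =>
        if a = b then C i j else if a < b then θ i j else θ j i

/-- The symplectic-form matrix `J' = J_{2m} ⊕ (I_k ⊗ J_{2n})` on the index set of `S_k`. -/
def Jext (m n k : ℕ) :
    Matrix (Fin (2 * m) ⊕ Fin k × Fin (2 * n)) (Fin (2 * m) ⊕ Fin k × Fin (2 * n)) ℝ :=
  Matrix.fromBlocks (Jmat m) 0 0 ((1 : Matrix (Fin k) (Fin k) ℝ) ⊗ₖ Jmat n)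

/-!
The complex matrix `S_k + (i/2)J'` is the block matrix `[[M, X], [Xᴴ, D]]` with `M = A + (i/2)J`
and every copy-block of `X` equal to `B`, so by the Schur complement it is positive semidefinite iff
`D - Xᴴ M⁻¹ X = I_k ⊗ P + 𝟙𝟙ᵀ ⊗ Q` is, where `P = C - θ + (i/2)J` and `Q = θ - Bᵀ M⁻¹ B`.
Writing `𝟙𝟙ᵀ = k Π` with `Π` the orthogonal projection onto constant vectors,
`I_k ⊗ P + 𝟙𝟙ᵀ ⊗ Q = (I - Π) ⊗ P + Π ⊗ (P + k Q)`, a sum of Kronecker products of positive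
matrices. Conversely, compressing by `u ⊗ I` with `u = e_a - e_b` and `u = 𝟙` yields `2 P` and
`k (P + k Q)`.
-/

namespace Matrix

variable {α 𝕜 ι N : Type*}

def allOnes (ι α : Type*) [One α] : Matrix ι ι α := of fun _ _ => 1

theorem allOnes_mulVec [NonAssocSemiring α] [Fintype ι] (u : ι → α) :
    allOnes ι α *ᵥ u = fun _ => ∑ i, u i := by
  ext; simp [allOnes, mulVec, dotProduct]

theorem allOnes_mul_allOnes [NonAssocSemiring α] [Fintype ι] :
    allOnes ι α * allOnes ι α = (Fintype.card ι : α) • allOnes ι α := by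
  ext; simp [allOnes, mul_apply]

theorem conjTranspose_allOnes [Semiring α] [StarRing α] : (allOnes ι α)ᴴ = allOnes ι α := by
  ext; simp [allOnes]

theorem kronecker_sub [NonUnitalNonAssocRing α] (A : Matrix ι ι α) (B₁ B₂ : Matrix N N α) :
    A ⊗ₖ (B₁ - B₂) = A ⊗ₖ B₁ - A ⊗ₖ B₂ := by
  ext; simp [mul_sub]

theorem conjTranspose_submatrix_snd_mul_mul [Semiring α] [StarRing α] {m : Type*}
    [Fintype m] (Y : Matrix m N α) (Z : Matrix m m α) :
    (Y.submatrix id Prod.snd : Matrix m (ι × N) α)ᴴ * Z * Y.submatrix id Prod.snd =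
      allOnes ι α ⊗ₖ (Yᴴ * Z * Y) := by
  ext ⟨a, i⟩ ⟨b, j⟩
  simp [allOnes, mul_apply]

-- `of fun p j => if p.2 = j then u p.1 else 0` is the matrix `u ⊗ I`
theorem conjTranspose_mul_kronecker_mul_eq_smul [CommSemiring α] [StarRing α] [Fintype ι]
    [Fintype N] [DecidableEq N] (u : ι → α) (A : Matrix ι ι α) (B : Matrix N N α) :
    (of fun (p : ι × N) j => if p.2 = j then u p.1 else 0)ᴴ * (A ⊗ₖ B) *
      (of fun (p : ι × N) j => if p.2 = j then u p.1 else 0) = (star u ⬝ᵥ A *ᵥ u) • B := by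
  ext i j
  simp only [mul_apply, Fintype.sum_prod_type, conjTranspose_apply, of_apply, kronecker_apply,
    apply_ite star, star_zero, ite_mul, zero_mul, mul_ite, mul_zero, Finset.sum_ite_eq',
    Finset.mem_univ, if_true, Matrix.smul_apply, smul_eq_mul, dotProduct, mulVec,
    Finset.sum_mul, Finset.mul_sum, Pi.star_apply]
  rw [Finset.sum_comm]
  exact Finset.sum_congr rfl fun _ _ => Finset.sum_congr rfl fun _ _ => by ring

variable [RCLike 𝕜]

theorem posSemidef_allOnes [Fintype ι] : (allOnes ι 𝕜).PosSemidef := by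
  simpa [vecMulVec, allOnes] using posSemidef_vecMulVec_self_star (1 : ι → 𝕜)

theorem posSemidef_one_sub_inv_card_smul_allOnes [Fintype ι] [DecidableEq ι] [Nonempty ι] :
    (1 - (Fintype.card ι : 𝕜)⁻¹ • allOnes ι 𝕜).PosSemidef := by
  set E := (Fintype.card ι : 𝕜)⁻¹ • allOnes ι 𝕜
  have hE : Eᴴ = E := by simp [E, conjTranspose_smul, conjTranspose_allOnes]
  have hEE : E * E = E := by
    simp only [E, smul_mul_smul, allOnes_mul_allOnes, smul_smul]
    field_simp
  have : 1 - E = (1 - E)ᴴ * (1 - E) := by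
    rw [conjTranspose_sub, conjTranspose_one, hE, sub_mul, mul_sub, mul_sub, hEE]
    simp
  rw [this]
  exact posSemidef_conjTranspose_mul_self _

theorem PosSemidef.compress_kronecker_add [Fintype ι] [Fintype N] [DecidableEq N]
    {A₁ A₂ : Matrix ι ι 𝕜} {B₁ B₂ : Matrix N N 𝕜}
    (h : (A₁ ⊗ₖ B₁ + A₂ ⊗ₖ B₂).PosSemidef) (u : ι → 𝕜) :
    ((star u ⬝ᵥ A₁ *ᵥ u) • B₁ + (star u ⬝ᵥ A₂ *ᵥ u) • B₂).PosSemidef := by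
  simpa only [Matrix.mul_add, Matrix.add_mul, conjTranspose_mul_kronecker_mul_eq_smul] using
    h.conjTranspose_mul_mul_same (of fun (p : ι × N) j => if p.2 = j then u p.1 else 0)

theorem PosSemidef.of_smul {P : Matrix N N 𝕜} {c : 𝕜} (hc : 0 < c) (h : (c • P).PosSemidef) :
    P.PosSemidef := by
  simpa [smul_smul, inv_mul_cancel₀ hc.ne'] using h.smul (RCLike.inv_pos.mpr hc).le

theorem posSemidef_one_kronecker_add_allOnes_kronecker_iff [Fintype ι] [DecidableEq ι]
    [Nontrivial ι] [Fintype N] [DecidableEq N] {P Q : Matrix N N 𝕜} :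
    ((1 : Matrix ι ι 𝕜) ⊗ₖ P + allOnes ι 𝕜 ⊗ₖ Q).PosSemidef ↔
      P.PosSemidef ∧ (P + (Fintype.card ι : 𝕜) • Q).PosSemidef := by
  have hc : 0 < (Fintype.card ι : 𝕜) := by exact_mod_cast Fintype.card_pos
  constructor
  · intro h
    obtain ⟨a, b, hab⟩ := exists_pair_ne ι
    refine ⟨.of_smul two_pos ?_, .of_smul hc ?_⟩
    · set u : ι → 𝕜 := Pi.single a 1 - Pi.single b 1
      have hu₁ : star u ⬝ᵥ (1 : Matrix ι ι 𝕜) *ᵥ u = 2 := by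
        norm_num [u, dotProduct_sub, hab, hab.symm]
      have hu₂ : star u ⬝ᵥ allOnes ι 𝕜 *ᵥ u = 0 := by
        simp [u, allOnes_mulVec, Finset.sum_sub_distrib]
      simpa only [hu₁, hu₂, zero_smul, add_zero] using h.compress_kronecker_add u
    · have h₁ : star (1 : ι → 𝕜) ⬝ᵥ (1 : Matrix ι ι 𝕜) *ᵥ 1 = Fintype.card ι := by
        simp [dotProduct]
      have h₂ : star (1 : ι → 𝕜) ⬝ᵥ allOnes ι 𝕜 *ᵥ 1 = Fintype.card ι * Fintype.card ι := by
        simp [allOnes_mulVec, dotProduct]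
      simpa only [h₁, h₂, smul_add, smul_smul] using h.compress_kronecker_add 1
  · rintro ⟨hP, hR⟩
    set E := (Fintype.card ι : 𝕜)⁻¹ • allOnes ι 𝕜
    have hsplit : (1 : Matrix ι ι 𝕜) ⊗ₖ P + allOnes ι 𝕜 ⊗ₖ Q =
        (1 - E) ⊗ₖ P + E ⊗ₖ (P + (Fintype.card ι : 𝕜) • Q) := by
      ext ⟨a, i⟩ ⟨b, j⟩
      simp only [E, allOnes, add_apply, sub_apply, smul_apply, kroneckerMap_apply, of_apply,
        smul_eq_mul, mul_one, one_mul]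
      field_simp
      ring
    rw [hsplit]
    exact (posSemidef_one_sub_inv_card_smul_allOnes.kronecker hP).add
      ((posSemidef_allOnes.smul (RCLike.inv_pos.mpr hc).le).kronecker hR)

end Matrix

theorem conjTranspose_toC {p q : Type*} (M : Matrix p q ℝ) : (toC M)ᴴ = (toC M)ᵀ := by
  ext; simp [toC]

theorem toC_Sext_add_Jext {m n k : ℕ} (A : Matrix (Fin (2 * m)) (Fin (2 * m)) ℝ)
    (B : Matrix (Fin (2 * m)) (Fin (2 * n)) ℝ) (C : Matrix (Fin (2 * n)) (Fin (2 * n)) ℝ)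
    {θ : Matrix (Fin (2 * n)) (Fin (2 * n)) ℝ} (hθ : θ.IsSymm) :
    toC (Sext k A B C θ) + (Complex.I / 2) • toC (Jext m n k) =
      fromBlocks (toC A + (Complex.I / 2) • toC (Jmat m)) ((toC B).submatrix id Prod.snd)
        ((toC B).submatrix id Prod.snd)ᴴ
        (1 ⊗ₖ (toC C - toC θ + (Complex.I / 2) • toC (Jmat n)) + allOnes (Fin k) ℂ ⊗ₖ toC θ) := by
  ext (i | ⟨a, i⟩) (j | ⟨b, j⟩)
  · simp [Sext, Jext, toC]
  · simp [Sext, Jext, toC]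
  · simp [Sext, Jext, toC]
  · rcases lt_trichotomy a b with hab | rfl | hab
    · simp [Sext, Jext, toC, allOnes, hab, hab.ne, one_apply]
    · simp only [Sext, Jext, toC, allOnes, Matrix.add_apply, Matrix.sub_apply, Matrix.smul_apply,
        map_apply, fromBlocks_apply₂₂, kroneckerMap_apply, one_apply, of_apply, if_true, one_mul,
        smul_eq_mul]
      ring
    · simp [Sext, Jext, toC, allOnes, hab.ne', hab.not_gt, one_apply, hθ.apply]

theorem Sext_posSemidef_iff_general
    {m n : ℕ} {k : ℕ} (hk : 2 ≤ k)
    (A : Matrix (Fin (2 * m)) (Fin (2 * m)) ℝ)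
    (hM : (toC A + (Complex.I / 2) • toC (Jmat m)).PosSemidef)
    (hMinv : IsUnit (toC A + (Complex.I / 2) • toC (Jmat m)))
    (C : Matrix (Fin (2 * n)) (Fin (2 * n)) ℝ)
    (B : Matrix (Fin (2 * m)) (Fin (2 * n)) ℝ)
    (θ : Matrix (Fin (2 * n)) (Fin (2 * n)) ℝ) (hθ : θ.IsSymm) :
    (toC (Sext k A B C θ) + (Complex.I / 2) • toC (Jext m n k)).PosSemidef ↔
      (toC C - toC θ + (Complex.I / 2) • toC (Jmat n)).PosSemidef ∧
      (toC C + ((k : ℂ) - 1) • toC θ + (Complex.I / 2) • toC (Jmat n) -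
        (k : ℂ) •
          ((toC B)ᵀ * (toC A + (Complex.I / 2) • toC (Jmat m))⁻¹ * toC B)).PosSemidef := by
  have : Nontrivial (Fin k) := Fin.nontrivial_iff_two_le.mpr hk
  have := hMinv.invertible
  rw [toC_Sext_add_Jext A B C hθ, PosDef.fromBlocks₁₁ _ _ (hM.posDef_iff_isUnit.mpr hMinv),
    conjTranspose_submatrix_snd_mul_mul, conjTranspose_toC, add_sub_assoc, ← kronecker_sub,
    posSemidef_one_kronecker_add_allOnes_kronecker_iff, Fintype.card_fin]
  refine and_congr_right' (iff_of_eq (congrArg _ ?_))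
  module

/-- Positivity of the `k`-extension `S_k + (i/2)J'` reduces to two `2n × 2n` conditions. -/
theorem Sext_posSemidef_iff
    {m n : ℕ} (hm : 1 ≤ m) (hn : 1 ≤ n) {k : ℕ} (hk : 2 ≤ k)
    (A : Matrix (Fin (2 * m)) (Fin (2 * m)) ℝ) (hA : A.IsSymm)
    (hM : (toC A + (Complex.I / 2) • toC (Jmat m)).PosSemidef)
    (hMinv : IsUnit (toC A + (Complex.I / 2) • toC (Jmat m)))
    (C : Matrix (Fin (2 * n)) (Fin (2 * n)) ℝ) (hC : C.IsSymm)
    (B : Matrix (Fin (2 * m)) (Fin (2 * n)) ℝ)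
    (θ : Matrix (Fin (2 * n)) (Fin (2 * n)) ℝ) (hθ : θ.IsSymm) :
    (toC (Sext k A B C θ) + (Complex.I / 2) • toC (Jext m n k)).PosSemidef ↔
      (toC C - toC θ + (Complex.I / 2) • toC (Jmat n)).PosSemidef ∧
      (toC C + ((k : ℂ) - 1) • toC θ + (Complex.I / 2) • toC (Jmat n) -
        (k : ℂ) •
          ((toC B)ᵀ * (toC A + (Complex.I / 2) • toC (Jmat m))⁻¹ * toC B)).PosSemidef :=
  Sext_posSemidef_iff_general hk A hM hMinv C B θ hθ
end
end

section
/- Let m, n ≥ 1 and let A (real symmetric 2m×2m), C (real symmetric 2n×2n) and B (real 2m×2n) be given. Suppose that for every integer k ≥ 1 there exists a real 2n×2n matrix θ_k such that S_k(A,B,C,θ_k) + (i/2)(J_{2m} ⊕ (I_k ⊗ J_{2n})) is positive semidefinite. Then there exists a single real 2n×2n matrix θ such that for every integer k ≥ 1 the matrix S_k(A,B,C,θ) + (i/2)(J_{2m} ⊕ (I_k ⊗ J_{2n})) is positive semidefinite. -/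
open Matrix Complex
open scoped Kronecker ComplexOrder

noncomputable section

/-! The admissible sets `{θ | S_k(A,B,C,θ) + (i/2) J' ≥ 0}` decrease in `k`, since deleting copies
passes to a principal submatrix, and they are closed, since positive semidefiniteness is a closed
condition. For `k = 2` the set is also bounded: testing positivity on `e_(0,i) ± e_(1,j)` gives
`|θ i j| ≤ (C i i + C j j) / 2`. A decreasing sequence of nonempty closed sets, one of them compact,
has a common point. -/

namespace Matrix

variable {𝕜 ι : Type*} [RCLike 𝕜]

lemma PosSemidef.abs_re_apply_add_apply_le {M : Matrix ι ι 𝕜} (hM : M.PosSemidef) (i j : ι) :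
    |RCLike.re (M i j + M j i)| ≤ RCLike.re (M i i + M j j) := by
  have quad (s : ℝ) : 0 ≤ RCLike.re (M i i + s * (M i j + M j i) + s ^ 2 * M j j) := by
    have h := (hM.submatrix ![i, j]).dotProduct_mulVec_nonneg ![1, (s : 𝕜)]
    simp only [dotProduct, mulVec, Pi.star_apply, RCLike.star_def, submatrix_apply,
      Fin.sum_univ_two, cons_val_zero, cons_val_one, cons_val_fin_one, map_one, one_mul, mul_one,
      RCLike.conj_ofReal] at h
    convert RCLike.nonneg_iff.mp h |>.1 using 2
    ring
  have hpos := quad 1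
  have hneg := quad (-1)
  simp only [map_one, one_mul, one_pow, map_add, map_neg, neg_mul, neg_add_rev, even_two,
    Even.neg_pow] at hpos hneg
  rw [abs_le, map_add, map_add]
  constructor <;> linarith

lemma isClosed_setOf_posSemidef [Fintype ι] : IsClosed {M : Matrix ι ι 𝕜 | M.PosSemidef} := by
  simp only [posSemidef_iff_dotProduct_mulVec, Set.ofPred_and, Set.ofPred_forall]
  exact (isClosed_eq continuous_id.matrix_conjTranspose continuous_id).inter <|
    isClosed_iInter fun x => isClosed_le continuous_const <|
      continuous_const.dotProduct (continuous_id.matrix_mulVec continuous_const)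

end Matrix

lemma continuous_toC {p q : Type*} : Continuous (toC : Matrix p q ℝ → Matrix p q ℂ) :=
  continuous_id.matrix_map Complex.continuous_ofReal

section Extension

variable {m n : ℕ} (A : Matrix (Fin (2 * m)) (Fin (2 * m)) ℝ)
  (B : Matrix (Fin (2 * m)) (Fin (2 * n)) ℝ) (C : Matrix (Fin (2 * n)) (Fin (2 * n)) ℝ)

def extensionSet (k : ℕ) : Set (Matrix (Fin (2 * n)) (Fin (2 * n)) ℝ) :=
  {θ | (toC (Sext k A B C θ) + (Complex.I / 2) • toC (Jext m n k)).PosSemidef}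

def extensionEmbedding {k k' : ℕ} (h : k ≤ k') :
    Fin (2 * m) ⊕ Fin k × Fin (2 * n) → Fin (2 * m) ⊕ Fin k' × Fin (2 * n) :=
  Sum.map id (Prod.map (Fin.castLE h) id)

lemma Sext_submatrix_extensionEmbedding {k k' : ℕ} (h : k ≤ k')
    (θ : Matrix (Fin (2 * n)) (Fin (2 * n)) ℝ) :
    (Sext k' A B C θ).submatrix (extensionEmbedding h) (extensionEmbedding h) = Sext k A B C θ := by
  ext (i | ⟨a, i⟩) (j | ⟨b, j⟩) <;> simp [Sext, extensionEmbedding]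

lemma Jext_submatrix_extensionEmbedding {k k' : ℕ} (h : k ≤ k') :
    (Jext m n k').submatrix (extensionEmbedding h) (extensionEmbedding h) = Jext m n k := by
  ext (i | ⟨a, i⟩) (j | ⟨b, j⟩) <;> simp [Jext, extensionEmbedding, one_apply]

lemma extensionSet_antitone : Antitone (extensionSet A B C) := by
  intro k k' h θ hθ
  rw [extensionSet, Set.mem_ofPred_eq, ← Sext_submatrix_extensionEmbedding A B C h,
    ← Jext_submatrix_extensionEmbedding h]
  exact hθ.submatrix _

lemma continuous_Sext (k : ℕ) : Continuous (Sext k A B C) := by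
  refine continuous_pi fun x => continuous_pi fun y => ?_
  rcases x with i | ⟨a, i⟩ <;> rcases y with j | ⟨b, j⟩
  iterate 3 exact continuous_const
  simp only [Sext]
  split_ifs
  · exact continuous_const
  · exact continuous_id.matrix_elem i j
  · exact continuous_id.matrix_elem j i

lemma isClosed_extensionSet (k : ℕ) : IsClosed (extensionSet A B C k) :=
  isClosed_setOf_posSemidef.preimage <|
    (continuous_toC.comp (continuous_Sext A B C k)).add continuous_const

lemma abs_apply_le_of_mem_extensionSet_two {θ : Matrix (Fin (2 * n)) (Fin (2 * n)) ℝ}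
    (hθ : θ ∈ extensionSet A B C 2) (i j : Fin (2 * n)) : |θ i j| ≤ (C i i + C j j) / 2 := by
  have := hθ.abs_re_apply_add_apply_le (.inr (0, i)) (.inr (1, j))
  simp only [toC, Jext, Sext, Matrix.add_apply, map_apply, Matrix.smul_apply, fromBlocks_apply₂₂,
    kroneckerMap_apply, one_apply, Jmat, zero_ne_one, one_ne_zero, zero_lt_one, not_lt_zero,
    reduceIte, mul_ite, mul_one, mul_neg, neg_zero, mul_zero, ite_self, ofReal_zero, smul_eq_mul,
    add_zero, RCLike.re_to_complex, add_re, ofReal_re, Nat.add_eq_left, false_and] at this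
  rw [← two_mul, abs_mul, abs_two] at this
  linarith

lemma isCompact_extensionSet_two : IsCompact (extensionSet A B C 2) :=
  (isCompact_univ_pi fun i => isCompact_univ_pi fun j =>
      isCompact_Icc (a := -((C i i + C j j) / 2)) (b := (C i i + C j j) / 2)).of_isClosed_subset
    (isClosed_extensionSet A B C 2) fun _ hθ i _ j _ =>
      abs_le.mp (abs_apply_le_of_mem_extensionSet_two A B C hθ i j)

end Extension

theorem exists_uniform_extension_matrix_general
    {m n : ℕ}
    (A : Matrix (Fin (2 * m)) (Fin (2 * m)) ℝ)
    (C : Matrix (Fin (2 * n)) (Fin (2 * n)) ℝ)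
    (B : Matrix (Fin (2 * m)) (Fin (2 * n)) ℝ)
    (hext : ∀ k : ℕ, 1 ≤ k → ∃ θk : Matrix (Fin (2 * n)) (Fin (2 * n)) ℝ,
      (toC (Sext k A B C θk) + (Complex.I / 2) • toC (Jext m n k)).PosSemidef) :
    ∃ θ : Matrix (Fin (2 * n)) (Fin (2 * n)) ℝ, ∀ k : ℕ, 1 ≤ k →
      (toC (Sext k A B C θ) + (Complex.I / 2) • toC (Jext m n k)).PosSemidef := by
  obtain ⟨θ, hθ⟩ :=
    IsCompact.nonempty_iInter_of_sequence_nonempty_isCompact_isClosed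
      (fun j => extensionSet A B C (j + 2)) (fun j => extensionSet_antitone A B C (by omega))
      (fun j => hext (j + 2) (by omega)) (isCompact_extensionSet_two A B C)
      (fun j => isClosed_extensionSet A B C (j + 2))
  exact ⟨θ, fun k _ => extensionSet_antitone A B C (by omega) (Set.mem_iInter.mp hθ k)⟩

/-- If for every `k ≥ 1` some extension matrix `θ_k` works, then a single `θ` works for
all `k` simultaneously. -/
theorem exists_uniform_extension_matrix
    {m n : ℕ} (hm : 1 ≤ m) (hn : 1 ≤ n)
    (A : Matrix (Fin (2 * m)) (Fin (2 * m)) ℝ) (hA : A.IsSymm)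
    (C : Matrix (Fin (2 * n)) (Fin (2 * n)) ℝ) (hC : C.IsSymm)
    (B : Matrix (Fin (2 * m)) (Fin (2 * n)) ℝ)
    (hext : ∀ k : ℕ, 1 ≤ k → ∃ θk : Matrix (Fin (2 * n)) (Fin (2 * n)) ℝ,
      (toC (Sext k A B C θk) + (Complex.I / 2) • toC (Jext m n k)).PosSemidef) :
    ∃ θ : Matrix (Fin (2 * n)) (Fin (2 * n)) ℝ, ∀ k : ℕ, 1 ≤ k →
      (toC (Sext k A B C θ) + (Complex.I / 2) • toC (Jext m n k)).PosSemidef :=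
  exists_uniform_extension_matrix_general A C B hext
end
end
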